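/- arXiv:2007.14679 — 2 statements merged into one kernel-verified Lean document; each statement's English description precedes it below -/
import Mathlib

section
/- Let p ∈ ℝ², p ≠ 0, and p_BS = 0. Given θ ∈ ℝ with cos θ ≠ 0 and d > ‖p‖ such that there exists a point s on the ray {t(cos θ, sin θ) : t > 0} with ‖s‖ + ‖p − s‖ = d, and s_x > 0, then s is given in closed form by s_x = (1/2)(d² − p_x² − p_y²) / (√(1 + tan²θ) · d − p_x − tan θ · p_y) and s_y = tan θ · s_x. -/
/-!
Since `s = t (cos θ, sin θ)` with `t = ‖s‖`, the condition `‖p - s‖ = d - t` squares to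
`‖p‖² - 2 t ⟪p, (cos θ, sin θ)⟫ = d² - 2 t d`, which is linear in `t`:
`2 t (d - p_x cos θ - p_y sin θ) = d² - ‖p‖²`. Dividing the bracket by `cos θ > 0` turns it
into `√(1 + tan²θ) d - p_x - tan θ p_y`, and `s_x = t cos θ` gives the closed form.
-/

noncomputable def enorm2 (v : ℝ × ℝ) : ℝ := Real.sqrt (v.1 ^ 2 + v.2 ^ 2)

open Real

lemma enorm2_sq (v : ℝ × ℝ) : enorm2 v ^ 2 = v.1 ^ 2 + v.2 ^ 2 :=
  sq_sqrt (by positivity)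

lemma enorm2_polar {t : ℝ} (ht : 0 ≤ t) (θ : ℝ) : enorm2 (t * cos θ, t * sin θ) = t := by
  have h : (t * cos θ) ^ 2 + (t * sin θ) ^ 2 = t ^ 2 := by
    linear_combination t ^ 2 * cos_sq_add_sin_sq θ
  rw [enorm2, h, sqrt_sq ht]

lemma two_mul_mul_sub_eq_of_enorm2_sub_polar {p : ℝ × ℝ} {t θ d : ℝ}
    (h : enorm2 (p - (t * cos θ, t * sin θ)) = d - t) :
    2 * t * (d - p.1 * cos θ - p.2 * sin θ) = d ^ 2 - p.1 ^ 2 - p.2 ^ 2 := by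
  have hsq := enorm2_sq (p - (t * cos θ, t * sin θ))
  rw [h, Prod.fst_sub, Prod.snd_sub] at hsq
  linear_combination -hsq - t ^ 2 * sin_sq_add_cos_sq θ

lemma sqrt_one_add_tan_sq_mul_sub {θ : ℝ} (hcos : 0 < cos θ) (d x y : ℝ) :
    √(1 + tan θ ^ 2) * d - x - tan θ * y = (d - x * cos θ - y * sin θ) / cos θ := by
  rw [← inv_inv √(1 + tan θ ^ 2), inv_sqrt_one_add_tan_sq hcos, tan_eq_sin_div_cos]
  field_simp

theorem stmt_5_general (p s : ℝ × ℝ) (θ d t : ℝ)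
    (hcos : 0 < Real.cos θ)
    (ht : 0 < t) (hs : s = (t * Real.cos θ, t * Real.sin θ))
    (hsum : enorm2 s + enorm2 (p - s) = d)
    (hden : Real.sqrt (1 + Real.tan θ ^ 2) * d - p.1 - Real.tan θ * p.2 ≠ 0) :
    s.1 = (1 / 2) * (d ^ 2 - p.1 ^ 2 - p.2 ^ 2) /
        (Real.sqrt (1 + Real.tan θ ^ 2) * d - p.1 - Real.tan θ * p.2) ∧
    s.2 = Real.tan θ * s.1 := by
  subst hs
  rw [enorm2_polar ht.le] at hsum
  have hkey := two_mul_mul_sub_eq_of_enorm2_sub_polar (eq_sub_of_add_eq' hsum)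
  rw [sqrt_one_add_tan_sq_mul_sub hcos] at hden ⊢
  have hD : d - p.1 * cos θ - p.2 * sin θ ≠ 0 := fun h => hden (by rw [h, zero_div])
  constructor
  · rw [← hkey, div_div_eq_mul_div, eq_div_iff hD]
    ring
  · rw [tan_eq_sin_div_cos]
    field_simp

/-- Closed-form mapping of a scatterer.  The BS is at the origin; if the
scatterer `s` lies on the ray with angle `θ` (with `cos θ > 0`, so `s_x > 0`),
and the total path length from BS to `s` to the user `p` is `d > ‖p‖`, then
`s_x = (1/2)(d² − p_x² − p_y²)/(√(1 + tan²θ)·d − p_x − tan θ·p_y)` and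
`s_y = tan θ · s_x`. -/
theorem stmt_5 (p s : ℝ × ℝ) (θ d t : ℝ)
    (hp : p ≠ 0) (hcos : 0 < Real.cos θ) (hd : enorm2 p < d)
    (ht : 0 < t) (hs : s = (t * Real.cos θ, t * Real.sin θ))
    (hsum : enorm2 s + enorm2 (p - s) = d)
    (hsx : 0 < s.1)
    (hden : Real.sqrt (1 + Real.tan θ ^ 2) * d - p.1 - Real.tan θ * p.2 ≠ 0) :
    s.1 = (1 / 2) * (d ^ 2 - p.1 ^ 2 - p.2 ^ 2) /
        (Real.sqrt (1 + Real.tan θ ^ 2) * d - p.1 - Real.tan θ * p.2) ∧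
    s.2 = Real.tan θ * s.1 :=
  stmt_5_general p s θ d t hcos ht hs hsum hden
end

section
/- In the block-orthogonal case of the previous structure, the (0,0) block of the position CRLB, Σ_{0,0} = T̄_{0,0}ᵀ C_0 T̄_{0,0}, does not depend on the NLOS blocks C_1,…,C_K or T̄_{k,0}, T̄_{k,k} for k ≥ 1; hence PEB_K = PEB_0 when all paths are orthogonal. -/
/-!
Expanding the block product, `Σ_{0,0} = ∑_{p,q} T̄_{p,0}ᵀ (J⁻¹)_{p,q} T̄_{q,0}`. The first block
column of `T⁻¹` vanishes off its diagonal block, so only `p = q = 0` survives and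
`Σ_{0,0} = T̄_{0,0}ᵀ C_0 T̄_{0,0}`, whatever the remaining blocks of `T⁻¹` and `J⁻¹` are.
-/

open Matrix

def blockOf {K : ℕ} (M : Matrix (Fin K × Fin 4) (Fin K × Fin 4) ℝ)
    (h ℓ : Fin K) : Matrix (Fin 4) (Fin 4) ℝ :=
  fun i j => M (h, i) (ℓ, j)

theorem blockOf_eq_submatrix {K : ℕ} (M : Matrix (Fin K × Fin 4) (Fin K × Fin 4) ℝ)
    (h ℓ : Fin K) : blockOf M h ℓ = M.submatrix (Prod.mk h) (Prod.mk ℓ) :=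
  rfl

namespace Matrix

variable {l m n R : Type*} [Fintype l] [Fintype m] [CommSemiring R]

theorem transpose_mul_mul_eq_of_row_support (X : Matrix m n R) (J : Matrix m m R)
    {e : l → m} (he : Function.Injective e) (hX : ∀ i ∉ Set.range e, X i = 0) :
    Xᵀ * J * X = (X.submatrix e id)ᵀ * J.submatrix e e * X.submatrix e id := by
  ext i j
  simp only [mul_apply, transpose_apply, submatrix_apply, id, Finset.sum_mul]
  rw [Finset.sum_comm, Finset.sum_comm (γ := l)]
  refine (Fintype.sum_of_injective e he _ _ (fun q hq => ?_) fun q => ?_).symm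
  · simp [hX q hq]
  · refine Fintype.sum_of_injective e he _ _ (fun p hp => ?_) fun p => rfl
    simp [hX p hp]

end Matrix

theorem stmt_13_general (K : ℕ)
    (Tinv Jinv : Matrix (Fin (K + 1) × Fin 4) (Fin (K + 1) × Fin 4) ℝ)
    (Tb : Fin (K + 1) → Fin (K + 1) → Matrix (Fin 4) (Fin 4) ℝ)
    (C : Fin (K + 1) → Matrix (Fin 4) (Fin 4) ℝ)
    (J00 : Matrix (Fin 4) (Fin 4) ℝ)
    (hT : ∀ h ℓ : Fin (K + 1), blockOf Tinv ℓ h = Tb h ℓ)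
    (hTzero : ∀ h ℓ : Fin (K + 1), 1 ≤ (ℓ : ℕ) → ℓ ≠ h → Tb h ℓ = 0)
    (hJdiag : ∀ k : Fin (K + 1), blockOf Jinv k k = C k)
    (hC0 : C 0 = J00⁻¹)
    (Sig : Matrix (Fin (K + 1) × Fin 4) (Fin (K + 1) × Fin 4) ℝ)
    (hSig : Sig = Tinvᵀ * Jinv * Tinv) :
    blockOf Sig 0 0 = (Tb 0 0)ᵀ * J00⁻¹ * Tb 0 0 ∧
    Real.sqrt (blockOf Sig 0 0 2 2 + blockOf Sig 0 0 3 3) =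
      Real.sqrt (((Tb 0 0)ᵀ * J00⁻¹ * Tb 0 0) 2 2 +
        ((Tb 0 0)ᵀ * J00⁻¹ * Tb 0 0) 3 3) := by
  set X := Tinv.submatrix id (Prod.mk 0)
  have hX : ∀ i ∉ Set.range (Prod.mk 0), X i = 0 := by
    rintro ⟨k, a⟩ hk
    have hk0 : k ≠ 0 := fun h => hk ⟨a, by rw [h]⟩
    have hzero : blockOf Tinv k 0 = 0 :=
      (hT 0 k).trans (hTzero 0 k (Fin.pos_of_ne_zero hk0) hk0)
    exact congrFun hzero a
  have hblock : blockOf Sig 0 0 = (Tb 0 0)ᵀ * J00⁻¹ * Tb 0 0 := calc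
    blockOf Sig 0 0 = Xᵀ * Jinv * X := by
      rw [hSig, blockOf_eq_submatrix, submatrix_mul _ _ _ id _ Function.bijective_id,
        submatrix_mul _ _ _ id _ Function.bijective_id, transpose_submatrix]
      rfl
    _ = (X.submatrix (Prod.mk 0) id)ᵀ * Jinv.submatrix (Prod.mk 0) (Prod.mk 0) *
          X.submatrix (Prod.mk 0) id :=
      transpose_mul_mul_eq_of_row_support X Jinv (Prod.mk_right_injective 0) hX
    _ = (Tb 0 0)ᵀ * J00⁻¹ * Tb 0 0 := by
      rw [← hC0, ← hJdiag 0, ← hT 0 0]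
      rfl
  exact ⟨hblock, by rw [hblock]⟩

/-- In the block-orthogonal case, the `(0,0)` block of the position CRLB is
`Σ_{0,0} = T̄_{0,0}ᵀ C_0 T̄_{0,0}` (independent of the NLOS blocks), hence with
`C_0 = (J_{00})⁻¹` the PEB with `K` NLOS paths equals the LOS-only PEB:
`PEB_K = PEB_0`. -/
theorem stmt_13 (K : ℕ)
    (Tinv Jinv : Matrix (Fin (K + 1) × Fin 4) (Fin (K + 1) × Fin 4) ℝ)
    (Tb : Fin (K + 1) → Fin (K + 1) → Matrix (Fin 4) (Fin 4) ℝ)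
    (C : Fin (K + 1) → Matrix (Fin 4) (Fin 4) ℝ)
    (J00 : Matrix (Fin 4) (Fin 4) ℝ)
    (hT : ∀ h ℓ : Fin (K + 1), blockOf Tinv ℓ h = Tb h ℓ)
    (hTzero : ∀ h ℓ : Fin (K + 1), 1 ≤ (ℓ : ℕ) → ℓ ≠ h → Tb h ℓ = 0)
    (hJdiag : ∀ k : Fin (K + 1), blockOf Jinv k k = C k)
    (hJoff : ∀ h ℓ : Fin (K + 1), h ≠ ℓ → blockOf Jinv h ℓ = 0)
    (hC0 : C 0 = J00⁻¹)
    (Sig : Matrix (Fin (K + 1) × Fin 4) (Fin (K + 1) × Fin 4) ℝ)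
    (hSig : Sig = Tinvᵀ * Jinv * Tinv) :
    blockOf Sig 0 0 = (Tb 0 0)ᵀ * J00⁻¹ * Tb 0 0 ∧
    Real.sqrt (blockOf Sig 0 0 2 2 + blockOf Sig 0 0 3 3) =
      Real.sqrt (((Tb 0 0)ᵀ * J00⁻¹ * Tb 0 0) 2 2 +
        ((Tb 0 0)ᵀ * J00⁻¹ * Tb 0 0) 3 3) :=
  stmt_13_general K Tinv Jinv Tb C J00 hT hTzero hJdiag hC0 Sig hSig
end
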